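/- arXiv:0911.2521 — 6 statements merged into one kernel-verified Lean document; each statement's English description precedes it below -/
import Mathlib

section
/- Let π be a finite group, E an invertible π-lattice, and C a coflabby π-lattice. Then every short exact sequence of π-lattices 0 → C → N → E → 0 splits. -/
/-- A permutation `π`-lattice: equivariantly isomorphic to `ι →₀ ℤ` with `π`
permuting the basis `ι`. -/
def IsPermutationLattice (π : Type*) [Group π] (M : Type*) [AddCommGroup M]
    [DistribMulAction π M] : Prop :=
  ∃ (ι : Type) (_ : Fintype ι) (σ : π →* Equiv.Perm ι) (e : M ≃+ (ι →₀ ℤ)),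
    ∀ (g : π) (m : M), e (g • m) = Finsupp.equivMapDomain (σ g) (e m)

/-- An invertible (permutation projective) `π`-lattice: a direct summand of a
permutation lattice. -/
def IsInvertibleLattice (π : Type*) [Group π] (M : Type*) [AddCommGroup M]
    [DistribMulAction π M] : Prop :=
  ∃ (ι : Type) (_ : Fintype ι) (σ : π →* Equiv.Perm ι)
    (s : M →+ (ι →₀ ℤ)) (p : (ι →₀ ℤ) →+ M),
    (∀ (g : π) (m : M), s (g • m) = Finsupp.equivMapDomain (σ g) (s m)) ∧
    (∀ (g : π) (f : ι →₀ ℤ), p (Finsupp.equivMapDomain (σ g) f) = g • p f) ∧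
    ∀ m, p (s m) = m

/-- Flabby: Tate cohomology `Ĥ⁻¹(H, M) = 0` for every subgroup `H`, i.e. every
element killed by the norm of `H` lies in the subgroup generated by elements
`h • y - y`. -/
def IsFlabby (π : Type*) [Group π] (M : Type*) [AddCommGroup M]
    [DistribMulAction π M] : Prop :=
  ∀ (H : Subgroup π) [Fintype H] (m : M),
    (∑ h : H, (h : π) • m) = 0 →
      m ∈ AddSubgroup.closure {x : M | ∃ (h : H) (y : M), x = (h : π) • y - y}

/-- Coflabby: `H¹(H, M) = 0` for every subgroup `H`, i.e. every 1-cocycle is a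
1-coboundary. -/
def IsCoflabby (π : Type*) [Group π] (M : Type*) [AddCommGroup M]
    [DistribMulAction π M] : Prop :=
  ∀ (H : Subgroup π) (f : H → M),
    (∀ g h : H, f (g * h) = f g + (g : π) • f h) →
      ∃ m : M, ∀ g : H, f g = (g : π) • m - m

/-- A bundled `π`-module (carrier with an additive action of `π`). -/
structure GLat (π : Type) [Group π] where
  carrier : Type
  [acg : AddCommGroup carrier]
  [act : DistribMulAction π carrier]

attribute [instance] GLat.acg GLat.act

/-- Similarity of `π`-lattices: `M ⊕ Q₁ ≅ N ⊕ Q₂` equivariantly for some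
permutation lattices `Q₁`, `Q₂`. -/
def SimilarLattice (π : Type*) [Group π] (M N : Type*) [AddCommGroup M]
    [DistribMulAction π M] [AddCommGroup N] [DistribMulAction π N] : Prop :=
  ∃ (ι κ : Type) (_ : Fintype ι) (_ : Fintype κ) (σ : π →* Equiv.Perm ι)
    (τ : π →* Equiv.Perm κ) (e : M × (ι →₀ ℤ) ≃+ N × (κ →₀ ℤ)),
    ∀ (g : π) (m : M) (f : ι →₀ ℤ),
      e (g • m, Finsupp.equivMapDomain (σ g) f) =
        (g • (e (m, f)).1, Finsupp.equivMapDomain (τ g) (e (m, f)).2)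

/-- A flabby resolution `0 → M → P → F → 0` of `M`: `P` is a permutation
lattice (modelled as `ι →₀ ℤ`) and `F` is flabby. -/
def FlabbyResolution (π : Type*) [Group π] (M F : Type*) [AddCommGroup M]
    [DistribMulAction π M] [AddCommGroup F] [DistribMulAction π F] : Prop :=
  ∃ (ι : Type) (_ : Fintype ι) (σ : π →* Equiv.Perm ι)
    (i : M →+ (ι →₀ ℤ)) (p : (ι →₀ ℤ) →+ F),
    (∀ (g : π) (m : M), i (g • m) = Finsupp.equivMapDomain (σ g) (i m)) ∧
    (∀ (g : π) (f : ι →₀ ℤ), p (Finsupp.equivMapDomain (σ g) f) = g • p f) ∧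
    Function.Injective i ∧ Function.Surjective p ∧
    (∀ f : ι →₀ ℤ, p f = 0 ↔ f ∈ Set.range i) ∧
    IsFlabby π F

/-- `[M]ᶠˡ` is invertible: some flabby resolution `0 → M → P → F → 0` has `F`
similar to an invertible lattice `E`. -/
def FlabbyClassInvertible (π : Type) [Group π] (M : Type*) [AddCommGroup M]
    [DistribMulAction π M] : Prop :=
  ∃ (F E : GLat π), (Module.Free ℤ F.carrier ∧ Module.Finite ℤ F.carrier) ∧
    (Module.Free ℤ E.carrier ∧ Module.Finite ℤ E.carrier) ∧
    FlabbyResolution π M F.carrier ∧ IsInvertibleLattice π E.carrier ∧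
    SimilarLattice π F.carrier E.carrier

/-!
`E` is a retract of a permutation lattice `ι →₀ ℤ`, so a section of `p` is obtained from an
equivariant map `v : ι → N` lifting the images in `E` of the basis vectors. Such a `v` is built
one orbit at a time: at an orbit representative `t` the value must be fixed by the stabilizer
`H` of `t`. If `n` is any preimage, `h ↦ h • n - n` is a 1-cocycle of `H` with values in `C`;
as `C` is coflabby it is the coboundary of some `m`, and `n - m` is an `H`-fixed preimage.
-/

theorem Finsupp.linearCombination_equivMapDomain_of_apply_eq_smul {M N ι : Type*} [Monoid M]
    [AddCommGroup N] [DistribMulAction M N] {v : ι → N} {e : ι ≃ ι} {g : M}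
    (hv : ∀ j, v (e j) = g • v j) (f : ι →₀ ℤ) :
    linearCombination ℤ v (equivMapDomain e f) = g • linearCombination ℤ v f := by
  rw [equivMapDomain_eq_mapDomain, linearCombination_mapDomain]
  induction f using Finsupp.induction_linear with
  | zero => simp
  | add f₁ f₂ h₁ h₂ => rw [map_add, map_add, h₁, h₂, smul_add]
  | single j n =>
    rw [linearCombination_single, linearCombination_single, Function.comp_apply, hv]
    exact (smul_comm g n (v j)).symm

theorem MulAction.exists_equivariant_of_forall_stabilizer_smul_eq {π ι N : Type*} [Group π]
    [MulAction π ι] [MulAction π N] {w : ι → N}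
    (hw : ∀ t, ∀ g ∈ stabilizer π t, g • w t = w t) :
    ∃ v : ι → N, (∀ (g : π) j, v (g • j) = g • v j) ∧ ∀ j, ∃ g : π, v j = g • w (g⁻¹ • j) := by
  let r : ι → ι := fun j => (Quotient.mk (orbitRel π ι) j).out
  have hr_smul : ∀ (g : π) j, r (g • j) = r j := fun g j =>
    congrArg Quotient.out (Quotient.sound (orbitRel_apply.2 ⟨g, rfl⟩))
  have hr_orbit : ∀ j, ∃ a : π, a • j = r j := fun j => orbitRel_apply.1 (Quotient.mk_out j)
  choose a ha using hr_orbit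
  refine ⟨fun j => (a j)⁻¹ • w (r j), fun g j => ?_, fun j => ⟨(a j)⁻¹, ?_⟩⟩
  · have hstab : a (g • j) * g * (a j)⁻¹ ∈ stabilizer π (r j) := by
      rw [mem_stabilizer_iff, mul_smul, mul_smul, ← ha j, inv_smul_smul, ha (g • j), hr_smul, ha j]
    calc (a (g • j))⁻¹ • w (r (g • j))
        = (a (g • j))⁻¹ • (a (g • j) * g * (a j)⁻¹) • w (r j) := by rw [hw _ _ hstab, hr_smul]
      _ = g • (a j)⁻¹ • w (r j) := by rw [smul_smul, smul_smul]; group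
  · rw [inv_inv, ha j]

theorem IsCoflabby.exists_fixed_lift {π C N E : Type*} [Group π] [AddCommGroup C]
    [AddCommGroup N] [AddCommGroup E] [DistribMulAction π C] [DistribMulAction π N]
    [DistribMulAction π E] (hC : IsCoflabby π C) {i : C →+ N} {p : N →+ E}
    (hi : ∀ (g : π) (x : C), i (g • x) = g • i x)
    (hp : ∀ (g : π) (x : N), p (g • x) = g • p x)
    (hinj : Function.Injective i) (hex : ∀ x : N, p x = 0 ↔ x ∈ Set.range i)
    (H : Subgroup π) {n : N} (hn : ∀ h ∈ H, h • p n = p n) :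
    ∃ n' : N, p n' = p n ∧ ∀ h ∈ H, h • n' = n' := by
  have hdefect : ∀ h : H, ∃ c : C, i c = (h : π) • n - n := fun h =>
    (hex _).1 (by rw [map_sub, hp, hn h h.2, sub_self])
  choose c hc using hdefect
  have hcocycle : ∀ g h : H, c (g * h) = c g + (g : π) • c h := fun g h =>
    hinj (by rw [hc, map_add, hi, hc, hc, Subgroup.coe_mul, mul_smul, smul_sub]; abel)
  obtain ⟨m, hm⟩ := hC H c hcocycle
  refine ⟨n - i m, by rw [map_sub, (hex _).2 ⟨m, rfl⟩, sub_zero], fun h hh => ?_⟩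
  have hcm := hc ⟨h, hh⟩
  rw [hm, map_sub, hi] at hcm
  rw [smul_sub, sub_eq_sub_iff_sub_eq_sub, ← hcm]

theorem IsCoflabby.exists_equivariant_lift {π ι C N E : Type*} [Group π] [MulAction π ι]
    [AddCommGroup C] [AddCommGroup N] [AddCommGroup E] [DistribMulAction π C]
    [DistribMulAction π N] [DistribMulAction π E] (hC : IsCoflabby π C) {i : C →+ N}
    {p : N →+ E} (hi : ∀ (g : π) (x : C), i (g • x) = g • i x)
    (hp : ∀ (g : π) (x : N), p (g • x) = g • p x)
    (hinj : Function.Injective i) (hsurj : Function.Surjective p)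
    (hex : ∀ x : N, p x = 0 ↔ x ∈ Set.range i) {f : ι → E}
    (hf : ∀ (g : π) (j : ι), f (g • j) = g • f j) :
    ∃ v : ι → N, (∀ (g : π) (j : ι), v (g • j) = g • v j) ∧ ∀ j, p (v j) = f j := by
  have hfixed_lift : ∀ t, ∃ n : N, p n = f t ∧ ∀ g ∈ MulAction.stabilizer π t, g • n = n := by
    intro t
    obtain ⟨n, hn⟩ := hsurj (f t)
    obtain ⟨n', hn', hn'_fixed⟩ := hC.exists_fixed_lift hi hp hinj hex _ (n := n)
      fun g hg => by rw [hn, ← hf, MulAction.mem_stabilizer_iff.1 hg]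
    exact ⟨n', hn'.trans hn, hn'_fixed⟩
  choose w hpw hw using hfixed_lift
  obtain ⟨v, hv, hvw⟩ := MulAction.exists_equivariant_of_forall_stabilizer_smul_eq hw
  refine ⟨v, hv, fun j => ?_⟩
  obtain ⟨g, hg⟩ := hvw j
  rw [hg, hp, hpw, ← hf, smul_inv_smul]

theorem ses_coflabby_invertible_splits_general (π : Type) [Group π]
    (C N E : Type) [AddCommGroup C] [AddCommGroup N] [AddCommGroup E]
    [DistribMulAction π C] [DistribMulAction π N] [DistribMulAction π E]
    (hC : IsCoflabby π C) (hE : IsInvertibleLattice π E)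
    (i : C →+ N) (p : N →+ E)
    (hi : ∀ (g : π) (x : C), i (g • x) = g • i x)
    (hp : ∀ (g : π) (x : N), p (g • x) = g • p x)
    (hinj : Function.Injective i) (hsurj : Function.Surjective p)
    (hex : ∀ x : N, p x = 0 ↔ x ∈ Set.range i) :
    ∃ s : E →+ N, (∀ (g : π) (x : E), s (g • x) = g • s x) ∧ ∀ x : E, p (s x) = x := by
  obtain ⟨ι, _, σ, sE, q, hsE, hq, hqs⟩ := hE
  let _ : MulAction π ι := MulAction.compHom ι σ
  obtain ⟨v, hv, hpv⟩ := hC.exists_equivariant_lift hi hp hinj hsurj hex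
    (f := fun j => q (Finsupp.single j 1))
    fun g j => by rw [← hq, Finsupp.equivMapDomain_single]; rfl
  let L : (ι →₀ ℤ) →+ N := (Finsupp.linearCombination ℤ v).toAddMonoidHom
  have hpL : p.comp L = q := Finsupp.addHom_ext fun j n => by
    simp only [AddMonoidHom.comp_apply, L, LinearMap.toAddMonoidHom_coe,
      Finsupp.linearCombination_single, map_zsmul, hpv]
    rw [← map_zsmul, Finsupp.smul_single_one]
  refine ⟨L.comp sE, fun g x => ?_, fun x => ?_⟩
  · simp only [AddMonoidHom.comp_apply, L, LinearMap.toAddMonoidHom_coe, hsE]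
    exact Finsupp.linearCombination_equivMapDomain_of_apply_eq_smul (hv g) _
  · rw [AddMonoidHom.comp_apply, ← AddMonoidHom.comp_apply p, hpL, hqs]

/-- Every short exact sequence 0 → C → N → E → 0 of π-lattices with
C coflabby and E invertible splits. -/
theorem ses_coflabby_invertible_splits (π : Type) [Group π] [Fintype π]
    (C N E : Type) [AddCommGroup C] [AddCommGroup N] [AddCommGroup E]
    [DistribMulAction π C] [DistribMulAction π N] [DistribMulAction π E]
    [Module.Free ℤ C] [Module.Finite ℤ C] [Module.Free ℤ N] [Module.Finite ℤ N]
    [Module.Free ℤ E] [Module.Finite ℤ E]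
    (hC : IsCoflabby π C) (hE : IsInvertibleLattice π E)
    (i : C →+ N) (p : N →+ E)
    (hi : ∀ (g : π) (x : C), i (g • x) = g • i x)
    (hp : ∀ (g : π) (x : N), p (g • x) = g • p x)
    (hinj : Function.Injective i) (hsurj : Function.Surjective p)
    (hex : ∀ x : N, p x = 0 ↔ x ∈ Set.range i) :
    ∃ s : E →+ N, (∀ (g : π) (x : E), s (g • x) = g • s x) ∧ ∀ x : E, p (s x) = x :=
  ses_coflabby_invertible_splits_general π C N E hC hE i p hi hp hinj hsurj hex
end

section
/- For any finite group π and any π-lattice M, there exists a short exact sequence of π-lattices 0 → M → P → F → 0 where P is a permutation lattice and F is a flabby lattice. -/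
open Finsupp

section LatticeDuality

variable {M : Type*} [AddCommGroup M]

theorem exists_eq_smul_of_forall_dvd [Module.Free ℤ M] {c : ℤ} {x : M}
    (h : ∀ χ : Module.Dual ℤ M, c ∣ χ x) : ∃ y : M, x = c • y := by
  let b := Module.Free.chooseBasis ℤ M
  refine ⟨b.repr.symm ((b.repr x).mapRange (· / c) (Int.zero_ediv c)), b.repr.injective ?_⟩
  ext j
  simpa using (Int.mul_ediv_cancel' (h (b.coord j))).symm

theorem dvd_apply_of_mem_span {s : Set (Module.Dual ℤ M)} {c : ℤ} {x : M}
    (h : ∀ χ ∈ s, c ∣ χ x) {χ : Module.Dual ℤ M} (hχ : χ ∈ Submodule.span ℤ s) : c ∣ χ x := by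
  induction hχ using Submodule.span_induction with
  | mem χ hχ => exact h χ hχ
  | zero => exact dvd_zero c
  | add χ ψ _ _ hχ hψ => exact dvd_add hχ hψ
  | smul a χ _ hχ => exact Dvd.dvd.mul_left hχ a

-- Lift a `ℚ/ℤ`-valued character of `M ⧸ N` that is nonzero at `y` along `ℚ → ℚ/ℤ`.
theorem Submodule.exists_linearMap_rat_int_on_of_notMem [Module.Free ℤ M] (N : Submodule ℤ M)
    {y : M} (hy : y ∉ N) :
    ∃ u : M →ₗ[ℤ] ℚ, (∀ x ∈ N, ∃ z : ℤ, u x = z) ∧ ∀ z : ℤ, u y ≠ z := by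
  obtain ⟨c, hc⟩ := CharacterModule.exists_character_apply_ne_zero_of_ne_zero
    (a := N.mkQ y) (by simpa using hy)
  let q : ℚ →ₗ[ℤ] AddCircle (1 : ℚ) := (QuotientAddGroup.mk' _).toIntLinearMap
  obtain ⟨u, hu⟩ := Module.projective_lifting_property q (c.toIntLinearMap ∘ₗ N.mkQ)
    (QuotientAddGroup.mk'_surjective _)
  have hqu : ∀ x, (u x : AddCircle (1 : ℚ)) = c (N.mkQ x) := fun x => LinearMap.congr_fun hu x
  refine ⟨u, fun x hx => ?_, fun z hz => hc ?_⟩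
  · have : (u x : AddCircle (1 : ℚ)) = 0 := by
      rw [hqu, (Submodule.mkQ_apply N x), (Submodule.Quotient.mk_eq_zero N).mpr hx, map_zero]
    obtain ⟨n, hn⟩ := (AddCircle.coe_eq_zero_iff 1).mp this
    exact ⟨n, by simpa using hn.symm⟩
  · rw [← hqu, hz]
    exact (AddCircle.coe_eq_zero_iff 1).mpr ⟨z, by simp⟩

theorem exists_dual_intCast_eq {v : M →ₗ[ℤ] ℚ} (hv : ∀ x, ∃ z : ℤ, v x = z) :
    ∃ χ : Module.Dual ℤ M, ∀ x, (χ x : ℚ) = v x := by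
  choose χ hχ using hv
  refine ⟨(AddMonoidHom.mk' χ fun x y => Int.cast_injective (α := ℚ) ?_).toIntLinearMap,
    fun x => (hχ x).symm⟩
  push_cast
  rw [← hχ, ← hχ, ← hχ, map_add]

end LatticeDuality

section Norm

variable {G M : Type*} [Group G] [Fintype G] [AddCommGroup M] [DistribMulAction G M]

theorem smul_sum_smul (g : G) (x : M) : g • ∑ h : G, h • x = ∑ h : G, h • x := by
  rw [Finset.smul_sum]
  exact Fintype.sum_bijective (g * ·) (Group.mulLeft_bijective g) _ _ fun h =>
    (mul_smul g h x).symm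

theorem sum_smul_smul (g : G) (x : M) : ∑ h : G, h • g • x = ∑ h : G, h • x :=
  Fintype.sum_bijective (· * g) (Group.mulRight_bijective g) _ _ fun h => (mul_smul h g x).symm

theorem exists_sum_smul_eq_of_forall_dvd [Module.Free ℤ M] {m : M} (hm : ∀ g : G, g • m = m)
    (hdvd : ∀ χ : Module.Dual ℤ M, (∀ (g : G) (x : M), χ (g • x) = χ x) →
      (Fintype.card G : ℤ) ∣ χ m) :
    ∃ m' : M, ∑ g : G, g • m' = m := by
  let norm : M →ₗ[ℤ] M :=
    (AddMonoidHom.mk' (fun x => ∑ g : G, g • x) fun x y => by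
      simp [Finset.sum_add_distrib]).toIntLinearMap
  by_contra hm'
  obtain ⟨u, hu_int, hu_m⟩ := (LinearMap.range norm).exists_linearMap_rat_int_on_of_notMem
    (y := m) (by rintro ⟨m', rfl⟩; exact hm' ⟨m', rfl⟩)
  obtain ⟨χ, hχ⟩ := exists_dual_intCast_eq (v := u ∘ₗ norm) fun x => hu_int _ ⟨x, rfl⟩
  have hχ_inv : ∀ (g : G) (x : M), χ (g • x) = χ x := fun g x =>
    Int.cast_injective (α := ℚ) (by simp [hχ, norm, sum_smul_smul])
  obtain ⟨z, hz⟩ := hdvd χ hχ_inv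
  have hχm : (χ m : ℚ) = Fintype.card G * u m := by
    simp [hχ, norm, hm]
  refine hu_m z (mul_left_cancel₀ (Nat.cast_ne_zero.mpr (Fintype.card_ne_zero (α := G))) ?_)
  rw [← hχm, hz]
  push_cast
  ring

end Norm

-- `G` acts on `ι →₀ ℤ` by permuting the basis: `g • single a n = single (g • a) n`.
attribute [local instance] Finsupp.comapDistribMulAction

section Permutation

variable {G ι : Type*} [Group G] [MulAction G ι]

theorem equivMapDomain_toPerm (g : G) (f : ι →₀ ℤ) :
    equivMapDomain (MulAction.toPerm g) f = g • f := by
  rw [equivMapDomain_eq_mapDomain, comapSMul_def]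
  rfl

theorem sum_smul_apply_of_forall_smul_eq [Fintype G] (f : ι →₀ ℤ) {a : ι}
    (ha : ∀ g : G, g • a = a) : (∑ g : G, g • f) a = Fintype.card G * f a := by
  simp [Finsupp.finsetSum_apply, comapSMul_apply, ha]

theorem mem_closure_smul_sub_of_sum_smul_eq_zero [Fintype G] {f : ι →₀ ℤ}
    (hf : ∑ g : G, g • f = 0) :
    f ∈ AddSubgroup.closure {x | ∃ (g : G) (y : ι →₀ ℤ), x = g • y - y} := by
  let q : ι → MulAction.orbitRel.Quotient G ι := Quotient.mk _
  have hq : ∀ (g : G) (y : ι →₀ ℤ), (g • y).mapDomain q = y.mapDomain q := by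
    intro g y
    rw [comapSMul_def, ← mapDomain_comp]
    congr 1
    funext a
    exact Quotient.sound (MulAction.mem_orbit a g)
  have hqf : f.mapDomain q = 0 := by
    have : (Fintype.card G : ℤ) • f.mapDomain q = 0 := by
      rw [← mapDomain_zero (f := q), ← hf, mapDomain_finsetSum]
      simp [hq]
    simpa [Fintype.card_ne_zero] using this
  have hsub : ∀ f' : ι →₀ ℤ, f' - (f'.mapDomain q).mapDomain Quotient.out ∈
      AddSubgroup.closure {x | ∃ (g : G) (y : ι →₀ ℤ), x = g • y - y} := by
    intro f'
    rw [← mapDomain_comp]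
    induction f' using Finsupp.induction_linear with
    | zero => simp
    | add f₁ f₂ h₁ h₂ =>
      rw [mapDomain_add, add_sub_add_comm]
      exact add_mem h₁ h₂
    | single a z =>
      obtain ⟨g, hg⟩ : ∃ g : G, g • (q a).out = a :=
        (MulAction.orbitRel G ι).symm' (Quotient.mk_out' a)
      refine AddSubgroup.subset_closure ⟨g, single (q a).out z, ?_⟩
      rw [comapSMul_single, hg, mapDomain_single]
      rfl
  simpa [hqf] using hsub f

end Permutation

theorem AddMonoidHom.map_mem_closure_smul_sub {G P Q : Type*} [AddGroup P] [AddGroup Q]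
    [SMul G P] [SMul G Q] (φ : P →+ Q) (hφ : ∀ (g : G) (x : P), φ (g • x) = g • φ x) {x : P}
    (hx : x ∈ AddSubgroup.closure {x | ∃ (g : G) (y : P), x = g • y - y}) :
    φ x ∈ AddSubgroup.closure {x | ∃ (g : G) (y : Q), x = g • y - y} := by
  refine (AddSubgroup.closure_le ((AddSubgroup.closure _).comap φ)).mpr ?_ hx
  rintro _ ⟨g, y, rfl⟩
  exact AddSubgroup.subset_closure ⟨g, φ y, by rw [map_sub, hφ]⟩

abbrev QuotientAddGroup.distribMulActionOfStable {G P : Type*} [Monoid G] [AddCommGroup P]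
    [DistribMulAction G P] (N : AddSubgroup P) (hN : ∀ (g : G), ∀ x ∈ N, g • x ∈ N) :
    DistribMulAction G (P ⧸ N) :=
  letI : SMul G (P ⧸ N) :=
    ⟨fun g => QuotientAddGroup.map N N (DistribSMul.toAddMonoidHom P g) (hN g)⟩
  (QuotientAddGroup.mk'_surjective N).distribMulAction (QuotientAddGroup.mk' N) fun _ _ => rfl

namespace FlabbyResolution

variable (π : Type) [Group π] (M : Type) [AddCommGroup M] [DistribMulAction π M]

def invariantDual (H : Subgroup π) : Submodule ℤ (Module.Dual ℤ M) where
  carrier := {χ | ∀ h ∈ H, ∀ x : M, χ (h • x) = χ x}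
  zero_mem' _ _ _ := rfl
  add_mem' h₁ h₂ h hh x := by simp [h₁ h hh x, h₂ h hh x]
  smul_mem' c χ hχ h hh x := by simp [hχ h hh x]

variable [Module.Finite ℤ M]

noncomputable def invariantDualGens (H : Subgroup π) : Finset (Module.Dual ℤ M) :=
  (IsNoetherian.noetherian (invariantDual π M H)).choose

theorem span_invariantDualGens (H : Subgroup π) :
    Submodule.span ℤ (invariantDualGens π M H : Set (Module.Dual ℤ M)) = invariantDual π M H :=
  (IsNoetherian.noetherian (invariantDual π M H)).choose_spec

theorem mem_invariantDual_of_mem_gens {H : Subgroup π} {χ : Module.Dual ℤ M}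
    (hχ : χ ∈ invariantDualGens π M H) : χ ∈ invariantDual π M H :=
  span_invariantDualGens π M H ▸ Submodule.subset_span hχ

abbrev Block : Type := Σ H : Subgroup π, invariantDualGens π M H

abbrev Index : Type := Σ b : Block π M, π ⧸ b.1

theorem smul_mk_one {b : Block π M} {h : π} (hh : h ∈ b.1) :
    h • (⟨b, ((1 : π) : π ⧸ b.1)⟩ : Index π M) = ⟨b, (1 : π)⟩ := by
  rw [Sigma.smul_mk, MulAction.Quotient.smul_mk, smul_eq_mul, mul_one]
  congr 1
  exact QuotientGroup.eq.mpr (by simpa using hh)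

variable [Finite π]

noncomputable def embed : M →+ (Index π M →₀ ℤ) where
  toFun x := equivFunOnFinite.symm fun j => (j.1.2 : Module.Dual ℤ M) (j.2.out⁻¹ • x)
  map_zero' := by ext; simp
  map_add' x y := by ext; simp

theorem embed_apply_mk (x : M) (b : Block π M) (g : π) :
    embed π M x ⟨b, g⟩ = (b.2 : Module.Dual ℤ M) (g⁻¹ • x) := by
  obtain ⟨h, hh⟩ := QuotientGroup.mk_out_eq_mul b.1 g
  simp only [embed, AddMonoidHom.coe_mk, ZeroHom.coe_mk, coe_equivFunOnFinite_symm, hh,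
    mul_inv_rev, mul_smul]
  exact mem_invariantDual_of_mem_gens π M b.2.2 _ (inv_mem h.2) _

theorem embed_apply_one (x : M) (b : Block π M) :
    embed π M x ⟨b, ((1 : π) : π ⧸ b.1)⟩ = (b.2 : Module.Dual ℤ M) x := by
  rw [embed_apply_mk, inv_one, one_smul]

theorem embed_smul (g : π) (x : M) : embed π M (g • x) = g • embed π M x := by
  ext ⟨b, c⟩
  induction c using QuotientGroup.induction_on with
  | H a =>
    rw [comapSMul_apply, Sigma.smul_mk, MulAction.Quotient.smul_mk, embed_apply_mk,
      embed_apply_mk, smul_eq_mul, mul_inv_rev, inv_inv, mul_smul]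

theorem dvd_apply_of_forall_dvd_embed_apply {H : Subgroup π} {c : ℤ} {x : M}
    (h : ∀ χ : invariantDualGens π M H, c ∣ embed π M x ⟨⟨H, χ⟩, ((1 : π) : π ⧸ H)⟩)
    {χ : Module.Dual ℤ M} (hχ : χ ∈ invariantDual π M H) : c ∣ χ x := by
  rw [← span_invariantDualGens] at hχ
  exact dvd_apply_of_mem_span
    (fun χ' hχ' => (h ⟨χ', hχ'⟩).trans (embed_apply_one π M x ⟨H, ⟨χ', hχ'⟩⟩).dvd) hχ

noncomputable def Coker : Type := (Index π M →₀ ℤ) ⧸ (embed π M).range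

noncomputable instance : AddCommGroup (Coker π M) :=
  inferInstanceAs (AddCommGroup ((Index π M →₀ ℤ) ⧸ (embed π M).range))

noncomputable instance : DistribMulAction π (Coker π M) :=
  QuotientAddGroup.distribMulActionOfStable _ fun g _ ⟨x, hx⟩ => ⟨g • x, by rw [embed_smul, hx]⟩

noncomputable def mk : (Index π M →₀ ℤ) →+ Coker π M := QuotientAddGroup.mk' _

theorem mk_smul (g : π) (f : Index π M →₀ ℤ) : mk π M (g • f) = g • mk π M f := rfl

theorem mk_surjective : Function.Surjective (mk π M) := QuotientAddGroup.mk'_surjective _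

theorem mk_eq_zero_iff (f : Index π M →₀ ℤ) : mk π M f = 0 ↔ f ∈ (embed π M).range :=
  QuotientAddGroup.eq_zero_iff f

instance : Module.Finite ℤ (Coker π M) :=
  Module.Finite.of_surjective (mk π M).toIntLinearMap (mk_surjective π M)

variable [Module.Free ℤ M]

theorem exists_eq_smul_of_embed_eq_smul {x : M} {c : ℤ} {f : Index π M →₀ ℤ}
    (h : embed π M x = c • f) : ∃ y : M, x = c • y := by
  -- every linear form is `⊥`-invariant, so it is a combination of coordinates of `embed`
  refine exists_eq_smul_of_forall_dvd fun χ => dvd_apply_of_forall_dvd_embed_apply π M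
    (H := ⊥) (fun χ' => ⟨f ⟨⟨⊥, χ'⟩, (1 : π)⟩, by rw [h]; rfl⟩) fun g hg y => ?_
  rw [Subgroup.mem_bot.mp hg, one_smul]

theorem embed_injective : Function.Injective (embed π M) := by
  refine (injective_iff_map_eq_zero _).mpr fun x hx => ?_
  obtain ⟨y, rfl⟩ := exists_eq_smul_of_embed_eq_smul π M (c := 0) (f := 0) (by simpa using hx)
  exact zero_smul ℤ y

theorem mem_range_embed_of_smul_mem {c : ℤ} (hc : c ≠ 0) {f : Index π M →₀ ℤ}
    (hf : c • f ∈ (embed π M).range) : f ∈ (embed π M).range := by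
  obtain ⟨x, hx⟩ := hf
  obtain ⟨y, rfl⟩ := exists_eq_smul_of_embed_eq_smul π M hx
  refine ⟨y, smul_right_injective _ hc ?_⟩
  simpa [map_zsmul] using hx

instance : Module.IsTorsionFree ℤ (Coker π M) := .of_smul_eq_zero fun c y hy => by
  obtain ⟨f, rfl⟩ := mk_surjective π M y
  rw [← map_zsmul, mk_eq_zero_iff] at hy
  rw [or_iff_not_imp_left, mk_eq_zero_iff]
  exact fun hc => mem_range_embed_of_smul_mem π M hc hy

theorem isFlabby_coker : IsFlabby π (Coker π M) := by
  intro H _ y hy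
  obtain ⟨f, rfl⟩ := mk_surjective π M y
  obtain ⟨m₀, hm₀⟩ : ∑ h : H, (h : π) • f ∈ (embed π M).range := by
    rw [← mk_eq_zero_iff, map_sum]
    simpa only [mk_smul] using hy
  have hfix : ∀ h : H, h • m₀ = m₀ := fun h => embed_injective π M <| by
    rw [Subgroup.smul_def, embed_smul, hm₀]
    exact smul_sum_smul h f
  -- `H` fixes `(H, χ, 1 • H)`, where `∑ h • f` has `|H|` times the coordinate of `f`
  obtain ⟨m', hm'⟩ := exists_sum_smul_eq_of_forall_dvd hfix fun χ hχ =>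
    dvd_apply_of_forall_dvd_embed_apply π M (H := H)
      (fun χ' => ⟨f ⟨⟨H, χ'⟩, (1 : π)⟩, by
        rw [hm₀]
        exact sum_smul_apply_of_forall_smul_eq f fun h => smul_mk_one π M h.2⟩)
      fun h hh x => hχ ⟨h, hh⟩ x
  have hf' : ∑ h : H, h • (f - embed π M m') = 0 := by
    simp only [smul_sub, Finset.sum_sub_distrib, Subgroup.smul_def, ← embed_smul, ← map_sum]
    rw [← hm₀, ← hm']
    exact sub_self _
  have := (mk π M).map_mem_closure_smul_sub (G := H) (fun h x => mk_smul π M h x)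
    (mem_closure_smul_sub_of_sum_smul_eq_zero hf')
  rwa [map_sub, (mk_eq_zero_iff π M _).mpr ⟨m', rfl⟩, sub_zero] at this

end FlabbyResolution

/-- Every π-lattice M admits a flabby resolution
0 → M → P → F → 0 with P a permutation lattice and F flabby. -/
theorem exists_flabby_resolution (π : Type) [Group π] [Fintype π]
    (M : Type) [AddCommGroup M] [DistribMulAction π M]
    [Module.Free ℤ M] [Module.Finite ℤ M] :
    ∃ F : GLat π, (Module.Free ℤ F.carrier ∧ Module.Finite ℤ F.carrier) ∧
      FlabbyResolution π M F.carrier := by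
  open FlabbyResolution in
  refine ⟨⟨Coker π M⟩, ⟨inferInstance, inferInstance⟩, Index π M, Fintype.ofFinite _,
    MulAction.toPermHom π _, embed π M, mk π M, fun g x => ?_, fun g f => ?_,
    embed_injective π M, mk_surjective π M, mk_eq_zero_iff π M, isFlabby_coker π M⟩
  · rw [MulAction.toPermHom_apply, equivMapDomain_toPerm, embed_smul]
  · rw [MulAction.toPermHom_apply, equivMapDomain_toPerm, mk_smul]
end

section
/- Let G be a finite group and N a G-lattice such that the flabby class [N]^{fl} is invertible. If 0 → N → P → N' → 0 is a flabby resolution with N' invertible and N is coflabby, then the sequence splits and N is an invertible G-lattice. -/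
section Helpers

variable {G ιx κx : Type*} [Group G]

private lemma emd_mul (σ : G →* Equiv.Perm ιx) (g h : G) (f : ιx →₀ ℤ) :
    Finsupp.equivMapDomain (σ (g * h)) f =
      Finsupp.equivMapDomain (σ g) (Finsupp.equivMapDomain (σ h) f) := by
  rw [map_mul, Equiv.Perm.mul_def]
  exact Finsupp.equivMapDomain_trans (σ h) (σ g) f

private lemma emd_one (σ : G →* Equiv.Perm ιx) (f : ιx →₀ ℤ) :
    Finsupp.equivMapDomain (σ (1 : G)) f = f := by
  rw [map_one]
  exact Finsupp.equivMapDomain_refl f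

private lemma emd_add (e : ιx ≃ κx) (a b : ιx →₀ ℤ) :
    Finsupp.equivMapDomain e (a + b) =
      Finsupp.equivMapDomain e a + Finsupp.equivMapDomain e b := by
  simpa using map_add (Finsupp.domCongr (M := ℤ) e) a b

private lemma emd_sub (e : ιx ≃ κx) (a b : ιx →₀ ℤ) :
    Finsupp.equivMapDomain e (a - b) =
      Finsupp.equivMapDomain e a - Finsupp.equivMapDomain e b := by
  simpa using map_sub (Finsupp.domCongr (M := ℤ) e) a b

private lemma emd_zsmul (e : ιx ≃ κx) (n : ℤ) (a : ιx →₀ ℤ) :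
    Finsupp.equivMapDomain e (n • a) = n • Finsupp.equivMapDomain e a := by
  simpa using map_zsmul (Finsupp.domCongr (M := ℤ) e) n a

end Helpers

/-- If 0 → N → P → N' → 0 is a flabby resolution with N'
invertible and N coflabby, then the sequence splits and N is invertible. -/
theorem coflabby_resolution_invertible_splits (G : Type) [Group G] [Fintype G]
    (N : Type) [AddCommGroup N] [DistribMulAction G N]
    [Module.Free ℤ N] [Module.Finite ℤ N]
    (ι : Type) [Fintype ι] (σ : G →* Equiv.Perm ι)
    (N' : Type) [AddCommGroup N'] [DistribMulAction G N']
    [Module.Free ℤ N'] [Module.Finite ℤ N']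
    (i : N →+ (ι →₀ ℤ)) (p : (ι →₀ ℤ) →+ N')
    (hi : ∀ (g : G) (m : N), i (g • m) = Finsupp.equivMapDomain (σ g) (i m))
    (hp : ∀ (g : G) (f : ι →₀ ℤ), p (Finsupp.equivMapDomain (σ g) f) = g • p f)
    (hinj : Function.Injective i) (hsurj : Function.Surjective p)
    (hex : ∀ f : ι →₀ ℤ, p f = 0 ↔ f ∈ Set.range i)
    (hFl : IsFlabby G N') (hInv : IsInvertibleLattice G N')
    (hco : IsCoflabby G N) :
    (∃ s : N' →+ (ι →₀ ℤ),
      (∀ (g : G) (x : N'), s (g • x) = Finsupp.equivMapDomain (σ g) (s x)) ∧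
      ∀ x : N', p (s x) = x) ∧
    IsInvertibleLattice G N := by
  classical
  obtain ⟨κ, _, τ, s', p', hs', hp', hps'⟩ := hInv
  -- setoid of τ-orbits on κ
  letI st : Setoid κ :=
    ⟨fun a b => ∃ g : G, τ g a = b, by
      constructor
      · intro a; exact ⟨1, by simp [Equiv.Perm.one_def]⟩
      · rintro a b ⟨g, hg⟩
        exact ⟨g⁻¹, by rw [← hg, ← Equiv.Perm.mul_apply, ← map_mul]; simp⟩
      · rintro a b c ⟨g, hg⟩ ⟨g', hg'⟩
        exact ⟨g' * g, by rw [map_mul, Equiv.Perm.mul_apply, hg, hg']⟩⟩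
  let k0 : κ → κ := fun k => (Quotient.mk st k).out
  have hk0 : ∀ k : κ, ∃ g : G, τ g (k0 k) = k := fun k => Quotient.mk_out k
  have hk0eq : ∀ (g : G) (k : κ), k0 (τ g k) = k0 k := by
    intro g k
    have : Quotient.mk st (τ g k) = Quotient.mk st k :=
      Quotient.sound ⟨g⁻¹, by rw [← Equiv.Perm.mul_apply, ← map_mul]; simp⟩
    simp only [k0, this]
  -- Step A: stabilizer-invariant lift of `p' (single c 1)` for each `c`
  have stepA : ∀ c : κ, ∃ u : ι →₀ ℤ, p u = p' (Finsupp.single c 1) ∧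
      ∀ g : G, τ g c = c → Finsupp.equivMapDomain (σ g) u = u := by
    intro c
    obtain ⟨v, hv⟩ := hsurj (p' (Finsupp.single c 1))
    let H : Subgroup G := (MulAction.stabilizer (Equiv.Perm κ) c).comap τ
    have hH : ∀ g : H, τ (g : G) c = c := fun g => g.2
    have hker : ∀ g : H, p (Finsupp.equivMapDomain (σ (g : G)) v - v) = 0 := by
      intro g
      rw [map_sub, hp, hv, ← hp' (g : G) (Finsupp.single c 1),
        Finsupp.equivMapDomain_single, hH g, sub_self]
    choose f hf using fun g : H => (hex _).mp (hker g)
    have hcoc : ∀ g h : H, f (g * h) = f g + ((g : G)) • f h := by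
      intro g h
      apply hinj
      rw [map_add, hi, hf, hf, hf, Subgroup.coe_mul, emd_mul, emd_sub]
      abel
    obtain ⟨m, hm⟩ := hco H f hcoc
    refine ⟨v - i m, ?_, ?_⟩
    · rw [map_sub, hv, (hex (i m)).mpr ⟨m, rfl⟩, sub_zero]
    · intro g hg
      have h1 : i (f ⟨g, hg⟩) = Finsupp.equivMapDomain (σ g) v - v := hf ⟨g, hg⟩
      have h2 : f ⟨g, hg⟩ = g • m - m := hm ⟨g, hg⟩
      rw [emd_sub, ← hi]
      have : Finsupp.equivMapDomain (σ g) v = v + (i (g • m) - i m) := by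
        rw [← map_sub, ← h2, h1]; abel
      rw [this]; abel
  choose u hu1 hu2 using stepA
  choose gk hgk using hk0
  -- Step B: equivariant family `w` lifting the singles of `κ →₀ ℤ`
  let w : κ → (ι →₀ ℤ) := fun k => Finsupp.equivMapDomain (σ (gk k)) (u (k0 k))
  have hw1 : ∀ k, p (w k) = p' (Finsupp.single k 1) := by
    intro k
    show p (Finsupp.equivMapDomain (σ (gk k)) (u (k0 k))) = _
    rw [hp, hu1, ← hp', Finsupp.equivMapDomain_single, hgk]
  have hw2 : ∀ (g : G) (k : κ), w (τ g k) = Finsupp.equivMapDomain (σ g) (w k) := by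
    intro g k
    have h1 : k0 (τ g k) = k0 k := hk0eq g k
    have hst : τ ((gk (τ g k))⁻¹ * (g * gk k)) (k0 k) = k0 k := by
      rw [map_mul, map_mul, Equiv.Perm.mul_apply, Equiv.Perm.mul_apply, hgk k]
      have h3 : τ (gk (τ g k)) (k0 k) = τ g k := by rw [← h1]; exact hgk (τ g k)
      have h2 : τ ((gk (τ g k))⁻¹) (τ (gk (τ g k)) (k0 k)) = k0 k := by
        rw [← Equiv.Perm.mul_apply, ← map_mul]; simp
      rw [h3] at h2
      exact h2
    have key : u (k0 k) =
        Finsupp.equivMapDomain (σ ((gk (τ g k))⁻¹ * (g * gk k))) (u (k0 k)) :=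
      (hu2 (k0 k) _ hst).symm
    show Finsupp.equivMapDomain (σ (gk (τ g k))) (u (k0 (τ g k))) = _
    rw [h1, key, ← emd_mul]
    have : gk (τ g k) * ((gk (τ g k))⁻¹ * (g * gk k)) = g * gk k := by group
    rw [this, emd_mul]
  -- The equivariant lift `L : (κ →₀ ℤ) →+ (ι →₀ ℤ)`
  let L : (κ →₀ ℤ) →+ (ι →₀ ℤ) := Finsupp.liftAddHom (fun k => zmultiplesHom _ (w k))
  have hL : ∀ (k : κ) (n : ℤ), L (Finsupp.single k n) = n • w k := fun k n =>
    Finsupp.liftAddHom_apply_single _ _ _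
  have hsingle : ∀ (k : κ) (n : ℤ), n • Finsupp.single k (1 : ℤ) = Finsupp.single k n := by
    intro k n; rw [Finsupp.smul_single, smul_eq_mul, mul_one]
  have hpL : ∀ f : κ →₀ ℤ, p (L f) = p' f := by
    have : p.comp L = p' := by
      apply Finsupp.addHom_ext
      intro k n
      simp only [AddMonoidHom.comp_apply, hL]
      rw [map_zsmul, hw1, ← map_zsmul, hsingle]
    intro f; exact DFunLike.congr_fun this f
  have hLeq : ∀ (g : G) (f : κ →₀ ℤ),
      L (Finsupp.equivMapDomain (τ g) f) = Finsupp.equivMapDomain (σ g) (L f) := by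
    intro g
    have : L.comp (Finsupp.domCongr (M := ℤ) (τ g)).toAddMonoidHom =
        (Finsupp.domCongr (M := ℤ) (σ g)).toAddMonoidHom.comp L := by
      apply Finsupp.addHom_ext
      intro k n
      simp only [AddMonoidHom.comp_apply, AddEquiv.coe_toAddMonoidHom,
        Finsupp.domCongr_apply, Finsupp.equivMapDomain_single, hL]
      rw [hw2, emd_zsmul]
    intro f
    simpa using DFunLike.congr_fun this f
  -- The equivariant splitting `s = L ∘ s'`
  have hsection : ∀ x : N', p (L (s' x)) = x := fun x => by rw [hpL, hps']
  have hseq : ∀ (g : G) (x : N'),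
      (L.comp s') (g • x) = Finsupp.equivMapDomain (σ g) ((L.comp s') x) := by
    intro g x
    simp only [AddMonoidHom.comp_apply]
    rw [hs', hLeq]
  refine ⟨⟨L.comp s', hseq, fun x => hsection x⟩, ?_⟩
  -- N is invertible: retraction of i
  have hker2 : ∀ f : ι →₀ ℤ, ∃ n : N, i n = f - L (s' (p f)) := fun f =>
    (hex _).mp (by rw [map_sub, hsection, sub_self])
  choose r hr using hker2
  have hradd : ∀ a b : ι →₀ ℤ, r (a + b) = r a + r b := by
    intro a b
    apply hinj
    rw [map_add, hr, hr, hr, map_add, map_add, map_add]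
    abel
  let R : (ι →₀ ℤ) →+ N := AddMonoidHom.mk' r hradd
  refine ⟨ι, inferInstance, σ, i, R, hi, ?_, ?_⟩
  · intro g f
    apply hinj
    show i (r _) = _
    rw [hr, hi, hp]
    show _ = Finsupp.equivMapDomain (σ g) (i (r f))
    rw [hr, emd_sub]
    congr 1
    rw [hs', hLeq]
  · intro m
    apply hinj
    show i (r (i m)) = i m
    rw [hr, (hex (i m)).mpr ⟨m, rfl⟩, map_zero, map_zero, sub_zero]
end

section
/- Let L be a field and G a finite group acting on the rational function field L(x₁,…,x_m) such that: (i) σ(L) ⊆ L for all σ ∈ G, (ii) the restriction of the G-action to L is faithful, and (iii) for each σ ∈ G the column vector (σ(x₁),…,σ(x_m))ᵗ equals A(σ)·(x₁,…,x_m)ᵗ + B(σ) for some A(σ) ∈ GL_m(L) and B(σ) an m×1 matrix over L. Then there exist z₁,…,z_m ∈ L(x₁,…,x_m) such that L(x₁,…,x_m) = L(z₁,…,z_m) and σ(z_j) = z_j for all σ ∈ G and all j. -/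
/-!
Let `W` be the `L`-span of `1, x₁, …, xₘ`. Affineness makes `W` stable under `G`, and `G` acts
semilinearly on `W` with respect to a faithful action on `L`. Speiser's lemma (Galois descent,
via Dedekind's independence of characters) then shows that `W` is spanned over `L` by its
`G`-fixed vectors. Extending `{1}` to a basis of `W` made of fixed vectors adds at most `m`
fixed vectors `z₁, …, zₘ`; every `xᵢ` is an `L`-combination of `1` and the `zⱼ`, so
`L(z₁, …, zₘ) = L(x₁, …, xₘ)`.
-/

open Function Set Submodule Cardinal

theorem exists_fin_range_subset_insert_of_mk_le {α : Type*} {t : Set α} {m : ℕ}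
    (ht : #t ≤ m) (a : α) : ∃ z : Fin m → α, t ⊆ range z ∧ range z ⊆ insert a t := by
  obtain ⟨e⟩ : Nonempty (t ↪ Fin m) := lift_mk_le'.mp (by simpa using ht)
  refine ⟨extend e Subtype.val fun _ => a,
    fun v hv => ⟨e ⟨v, hv⟩, e.injective.extend_apply _ _ _⟩, ?_⟩
  rintro _ ⟨j, rfl⟩
  by_cases hj : ∃ v, e v = j
  · obtain ⟨v, rfl⟩ := hj
    exact mem_insert_of_mem _ (by rw [e.injective.extend_apply]; exact v.2)
  · rw [extend_apply' _ _ _ hj]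
    exact mem_insert _ _

theorem exists_range_subset_and_subset_span_insert {K V : Type*} [DivisionRing K]
    [AddCommGroup V] [Module K V] {S : Set V} {s₀ : V} (hs₀ : s₀ ∈ S) (hs₀ne : s₀ ≠ 0)
    (h0 : 0 ∈ S) {m : ℕ} (hrank : Module.rank K (span K S) ≤ m + 1) :
    ∃ z : Fin m → V, range z ⊆ S ∧ S ⊆ span K (insert s₀ (range z)) := by
  obtain ⟨b, hbS, hs₀b, hSb, hb⟩ := exists_linearIndepOn_id_extension
    (linearIndepOn_singleton_iff (R := K) (v := id).mpr hs₀ne) (singleton_subset_iff.mpr hs₀)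
  have hcard : #(b \ {s₀} : Set V) + 1 ≤ m + 1 := by
    rw [← mk_insert fun h => h.2 rfl, insert_sdiff_singleton, insert_eq_of_mem (hs₀b rfl),
      ← rank_span_set hb, span_eq_of_le _ (hbS.trans subset_span) (span_le.mpr hSb)]
    exact hrank
  obtain ⟨z, hbz, hzb⟩ := exists_fin_range_subset_insert_of_mk_le
    (add_one_le_add_one_iff.mp hcard) (0 : V)
  refine ⟨z, hzb.trans (insert_subset h0 (sdiff_subset.trans hbS)), hSb.trans (span_mono ?_)⟩
  intro v hv
  by_cases h : v = s₀
  · exact h ▸ mem_insert _ _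
  · exact mem_insert_of_mem _ (hbz ⟨hv, h⟩)

section Semilinear

variable {L F : Type*} [Field L] [Semiring F] [Algebra L F]

noncomputable def RingHom.restrictBase [Nontrivial F] (φ : F →+* F)
    (hφ : ∀ a : L, ∃ b, φ (algebraMap L F a) = algebraMap L F b) : L →+* L where
  toFun a := (hφ a).choose
  map_one' := (algebraMap L F).injective <| by rw [← (hφ 1).choose_spec, map_one, map_one]
  map_mul' a b := (algebraMap L F).injective <| by
    rw [← (hφ _).choose_spec, map_mul, map_mul, map_mul]
    exact congrArg₂ (· * ·) (hφ a).choose_spec (hφ b).choose_spec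
  map_zero' := (algebraMap L F).injective <| by rw [← (hφ 0).choose_spec, map_zero, map_zero]
  map_add' a b := (algebraMap L F).injective <| by
    rw [← (hφ _).choose_spec, map_add, map_add, map_add]
    exact congrArg₂ (· + ·) (hφ a).choose_spec (hφ b).choose_spec

theorem RingHom.apply_algebraMap_restrictBase [Nontrivial F] (φ : F →+* F)
    (hφ : ∀ a : L, ∃ b, φ (algebraMap L F a) = algebraMap L F b) (a : L) :
    φ (algebraMap L F a) = algebraMap L F (φ.restrictBase hφ a) :=
  (hφ a).choose_spec

theorem injective_of_faithful {G : Type*} [Group G] (ρ : G →* (F ≃+* F)) (σ : G → L →+* L)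
    (hσ : ∀ g a, ρ g (algebraMap L F a) = algebraMap L F (σ g a))
    (hfaithful : ∀ g : G, (∀ a : L, ρ g (algebraMap L F a) = algebraMap L F a) → g = 1) :
    Injective σ := by
  intro g h hgh
  refine (inv_mul_eq_one.mp (hfaithful (h⁻¹ * g) fun a => ?_)).symm
  calc ρ (h⁻¹ * g) (algebraMap L F a)
      = ρ h⁻¹ (ρ g (algebraMap L F a)) := by rw [map_mul]; rfl
    _ = ρ h⁻¹ (ρ h (algebraMap L F a)) := by rw [hσ g, hgh, ← hσ h]
    _ = algebraMap L F a := by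
      change (ρ h⁻¹ * ρ h) _ = _
      rw [← map_mul, inv_mul_cancel, map_one]
      rfl

theorem apply_mem_span_of_forall_mem_span {Φ : Type*} [FunLike Φ F F] [RingHomClass Φ F F]
    (φ : Φ) (hφ : ∀ a : L, ∃ b, φ (algebraMap L F a) = algebraMap L F b) {s : Set F}
    (hs : ∀ v ∈ s, φ v ∈ span L s) : ∀ v ∈ span L s, φ v ∈ span L s := by
  intro v hv
  induction hv using span_induction with
  | mem v hv => exact hs v hv
  | zero => simp
  | add u v _ _ hu hv => simpa using add_mem hu hv
  | smul a v _ hv =>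
    obtain ⟨b, hb⟩ := hφ a
    rw [Algebra.smul_def, map_mul, hb, ← Algebra.smul_def]
    exact smul_mem _ _ hv

theorem apply_mem_span_insert_one_of_affine {Φ ι : Type*} [FunLike Φ F F] [RingHomClass Φ F F]
    [Fintype ι] (φ : Φ) (hφ : ∀ a : L, ∃ b, φ (algebraMap L F a) = algebraMap L F b)
    (x : ι → F) (A : ι → ι → L) (B : ι → L)
    (hA : ∀ i, φ (x i) = ∑ j, algebraMap L F (A i j) * x j + algebraMap L F (B i)) :
    ∀ v ∈ span L (insert 1 (range x)), φ v ∈ span L (insert 1 (range x)) := by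
  have hx (j : ι) : x j ∈ span L (insert 1 (range x)) :=
    subset_span (mem_insert_of_mem _ (mem_range_self j))
  have h1 : (1 : F) ∈ span L (insert 1 (range x)) := subset_span (mem_insert _ _)
  refine apply_mem_span_of_forall_mem_span φ hφ ?_
  rintro _ (rfl | ⟨i, rfl⟩)
  · simpa using h1
  · rw [hA i, Algebra.algebraMap_eq_smul_one (B i)]
    refine add_mem (sum_mem fun j _ => ?_) (smul_mem _ _ h1)
    rw [← Algebra.smul_def]
    exact smul_mem _ _ (hx j)

end Semilinear

section Descent

variable {L F G : Type*} [Field L] [Ring F] [Algebra L F] [Group G]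

theorem apply_sum_apply_eq_self [Fintype G] (ρ : G →* (F ≃+* F)) (h : G) (v : F) :
    ρ h (∑ g, ρ g v) = ∑ g, ρ g v := by
  rw [map_sum]
  exact Fintype.sum_equiv (Equiv.mulLeft h) _ _ fun g => by rw [Equiv.coe_mulLeft, map_mul]; rfl

/-- Speiser's lemma. -/
theorem le_span_fixed [Finite G] (ρ : G →* (F ≃+* F)) (σ : G → L →+* L) (hσinj : Injective σ)
    (hσ : ∀ g a, ρ g (algebraMap L F a) = algebraMap L F (σ g a))
    (W : Submodule L F) (hW : ∀ g, ∀ w ∈ W, ρ g w ∈ W) :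
    W ≤ span L {w | w ∈ W ∧ ∀ g, ρ g w = w} := by
  have := Fintype.ofFinite G
  intro w hw
  by_contra hnot
  obtain ⟨f, hfw, hf⟩ := exists_dual_map_eq_bot_of_notMem hnot inferInstance
  -- the trace of `a * w` is a fixed vector of `W`, so `f` kills it; this is a linear relation
  -- between the characters `σ g`, whose coefficient at `g = 1` is `f w ≠ 0`
  have hrel : ∑ g, f (ρ g w) • ⇑(σ g : L →* L) = 0 := by
    funext a
    have hfix : ∑ g, ρ g (algebraMap L F a * w) ∈ span L {w | w ∈ W ∧ ∀ g, ρ g w = w} :=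
      subset_span ⟨sum_mem fun g _ => hW g _ (by rw [← Algebra.smul_def]; exact W.smul_mem a hw),
        fun h => apply_sum_apply_eq_self ρ h _⟩
    simp only [Finset.sum_apply, Pi.smul_apply, smul_eq_mul, Pi.zero_apply]
    calc ∑ g, f (ρ g w) * (σ g : L →* L) a
        = f (∑ g, ρ g (algebraMap L F a * w)) := by
          rw [map_sum]
          refine Finset.sum_congr rfl fun g _ => ?_
          rw [map_mul, hσ, ← Algebra.smul_def, map_smul, smul_eq_mul, mul_comm]
          rfl
      _ = 0 := (mem_bot L).mp (hf ▸ mem_map_of_mem hfix)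
  have hLI := (linearIndependent_monoidHom L L).comp (fun g => (σ g : L →* L))
    (RingHom.coe_monoidHom_injective.comp hσinj)
  exact hfw (by simpa using Fintype.linearIndependent_iff.mp hLI _ hrel 1)

end Descent

theorem IntermediateField.adjoin_image_algebraMap_eq_top {F A K : Type*} [Field F] [CommRing A]
    [Algebra F A] [Field K] [Algebra F K] [Algebra A K] [IsFractionRing A K] [IsScalarTower F A K]
    {s : Set A} (hs : Algebra.adjoin F s = ⊤) :
    IntermediateField.adjoin F (algebraMap A K '' s) = ⊤ := by
  rw [← IsFractionRing.algHom_fieldRange_eq_of_comp_eq_of_range_eq (f := AlgHom.id F K)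
    (g := IsScalarTower.toAlgHom F A K) rfl]
  · exact (AlgHom.fieldRange_eq_top (f := AlgHom.id F K)).mpr fun y => ⟨y, rfl⟩
  · rw [← Algebra.map_top, ← hs, AlgHom.map_adjoin]
    rfl

theorem MvPolynomial.eq_top_of_algebraMap_X_mem {L σ : Type*} [Field L]
    (E : IntermediateField L (FractionRing (MvPolynomial σ L)))
    (hX : ∀ i, algebraMap (MvPolynomial σ L) _ (X i) ∈ E) : E = ⊤ := by
  rw [eq_top_iff, ← IntermediateField.adjoin_image_algebraMap_eq_top (adjoin_range_X (R := L) (σ := σ)),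
    IntermediateField.adjoin_le_iff]
  rintro _ ⟨_, ⟨i, rfl⟩, rfl⟩
  exact hX i

theorem IntermediateField.span_insert_one_le_adjoin {K E : Type*} [Field K] [Field E]
    [Algebra K E] (s : Set E) :
    span K (insert 1 s) ≤ (IntermediateField.adjoin K s).toSubalgebra.toSubmodule :=
  span_le.mpr (insert_subset (IntermediateField.adjoin K s).one_mem (subset_adjoin K s))

theorem rank_span_insert_one_range_le {L F : Type*} [Field L] [Ring F] [Algebra L F] {m : ℕ}
    (x : Fin m → F) : Module.rank L (span L (insert 1 (range x))) ≤ m + 1 := by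
  calc Module.rank L (span L (insert 1 (range x)))
      ≤ #(insert 1 (range x) : Set F) := rank_span_le _
    _ ≤ #(range x) + 1 := mk_insert_le
    _ ≤ m + 1 := by gcongr; simpa using mk_range_le_lift (f := x)

/-- Hajja–Kang linearization: if a finite group G acts on the
rational function field L(x₁,…,x_m) by field automorphisms which stabilize L,
restrict faithfully to L, and act affine-linearly on the variables, then there
exist z₁,…,z_m fixed by G with L(x₁,…,x_m) = L(z₁,…,z_m). -/
theorem hajja_kang_linearization (L : Type) [Field L] (m : ℕ) (G : Type)
    [Group G] [Finite G]
    (ρ : G →* (FractionRing (MvPolynomial (Fin m) L) ≃+*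
      FractionRing (MvPolynomial (Fin m) L)))
    (hstab : ∀ (g : G) (a : L),
      ∃ b : L, ρ g (algebraMap L (FractionRing (MvPolynomial (Fin m) L)) a) =
        algebraMap L (FractionRing (MvPolynomial (Fin m) L)) b)
    (hfaithful : ∀ g : G,
      (∀ a : L, ρ g (algebraMap L (FractionRing (MvPolynomial (Fin m) L)) a) =
        algebraMap L (FractionRing (MvPolynomial (Fin m) L)) a) → g = 1)
    (haffine : ∀ g : G, ∃ (A : Matrix (Fin m) (Fin m) L) (B : Fin m → L),
      IsUnit A.det ∧ ∀ i : Fin m,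
        ρ g (algebraMap (MvPolynomial (Fin m) L)
            (FractionRing (MvPolynomial (Fin m) L)) (MvPolynomial.X i)) =
          ∑ j : Fin m, algebraMap L (FractionRing (MvPolynomial (Fin m) L)) (A i j) *
            algebraMap (MvPolynomial (Fin m) L)
              (FractionRing (MvPolynomial (Fin m) L)) (MvPolynomial.X j) +
            algebraMap L (FractionRing (MvPolynomial (Fin m) L)) (B i)) :
    ∃ z : Fin m → FractionRing (MvPolynomial (Fin m) L),
      (∀ (g : G) (j : Fin m), ρ g (z j) = z j) ∧
      IntermediateField.adjoin L (Set.range z) = ⊤ := by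
  set x : Fin m → FractionRing (MvPolynomial (Fin m) L) := fun i =>
    algebraMap (MvPolynomial (Fin m) L) _ (MvPolynomial.X i)
  set W := span L (insert 1 (range x))
  set S := {w | w ∈ W ∧ ∀ g, ρ g w = w}
  have hW (g : G) : ∀ w ∈ W, ρ g w ∈ W := by
    obtain ⟨A, B, -, hAB⟩ := haffine g
    exact apply_mem_span_insert_one_of_affine (ρ g) (hstab g) x A B hAB
  let σ (g : G) : L →+* L := (ρ g).toRingHom.restrictBase (hstab g)
  have hσ (g : G) (a : L) := (ρ g).toRingHom.apply_algebraMap_restrictBase (hstab g) a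
  have hWS : W = span L S := le_antisymm
    (le_span_fixed ρ σ (injective_of_faithful ρ σ hσ hfaithful) hσ W hW)
    (span_le.mpr fun w hw => hw.1)
  obtain ⟨z, hzS, hSz⟩ := exists_range_subset_and_subset_span_insert (S := S) (s₀ := 1)
    ⟨subset_span (mem_insert 1 _), fun g => map_one _⟩ one_ne_zero
    ⟨zero_mem W, fun g => map_zero _⟩ (by rw [← hWS]; exact rank_span_insert_one_range_le x)
  refine ⟨z, fun g j => (hzS (mem_range_self j)).2 g,
    MvPolynomial.eq_top_of_algebraMap_X_mem _ fun i => ?_⟩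
  have hxS : x i ∈ span L S := hWS ▸ subset_span (mem_insert_of_mem _ (mem_range_self i))
  exact IntermediateField.span_insert_one_le_adjoin _ (span_le.mpr hSz hxS)
end

section
/- Let R ⊆ S be commutative rings with a finite group G acting on S by R-algebra automorphisms such that S^G = R. Then S is a G-Galois covering of R (i.e., the map h: S ⊗_R S → ∏_{σ∈G} S, s₁ ⊗ s₂ ↦ (s₁·σ(s₂))_σ, is an isomorphism) if and only if S is a Galois extension of R with group G in the sense of Galois theory of commutative rings. -/
open TensorProduct

/-- The canonical map `h : S ⊗[R] S → ∏_{σ ∈ G} S`, `s₁ ⊗ s₂ ↦ (s₁ · σ(s₂))_σ`. -/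
noncomputable def galoisCoveringMap (R S G : Type) [CommRing R] [CommRing S]
    [Algebra R S] [Group G] [MulSemiringAction G S] [SMulCommClass G R S] :
    S ⊗[R] S →ₗ[R] (G → S) :=
  TensorProduct.lift (LinearMap.mk₂ R (fun s₁ s₂ σ => s₁ * σ • s₂)
    (by intro s₁ s₁' s₂; funext σ; simp [add_mul])
    (by intro r s₁ s₂; funext σ; simp [Algebra.smul_mul_assoc]
        )
    (by intro s₁ s₂ s₂'; funext σ; simp [smul_add, mul_add])
    (by intro r s₁ s₂; funext σ; simp only [Pi.smul_apply]; rw [smul_comm σ r s₂, mul_smul_comm]))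

lemma galoisCoveringMap_tmul (R S G : Type) [CommRing R] [CommRing S]
    [Algebra R S] [Group G] [MulSemiringAction G S] [SMulCommClass G R S]
    (s t : S) (σ : G) : galoisCoveringMap R S G (s ⊗ₜ t) σ = s * σ • t := rfl

/-- For R ⊆ S with a finite group G acting on S by R-algebra
automorphisms and S^G = R, the map h : S ⊗_R S → ∏_{σ∈G} S is an isomorphism
iff S is a Galois extension of R with group G in the sense of
Chase–Harrison–Rosenberg (existence of x_i, y_i with Σ x_i·σ(y_i) = δ_{σ,1}). -/
theorem galois_covering_iff_galois_extension (R S G : Type) [CommRing R]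
    [CommRing S] [Algebra R S] [Group G] [Fintype G] [DecidableEq G]
    [MulSemiringAction G S] [SMulCommClass G R S]
    (hinj : Function.Injective (algebraMap R S))
    (hfix : ∀ s : S, (∀ g : G, g • s = s) ↔ s ∈ Set.range (algebraMap R S)) :
    Function.Bijective (galoisCoveringMap R S G) ↔
    ∃ (n : ℕ) (x y : Fin n → S),
      ∀ σ : G, ∑ i : Fin n, x i * σ • y i = if σ = 1 then 1 else 0 := by
  constructor
  · intro hbij
    obtain ⟨z, hz⟩ := hbij.2 (fun σ => if σ = 1 then (1 : S) else 0)
    obtain ⟨F, rfl⟩ := TensorProduct.exists_finset z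
    refine ⟨F.card, fun i => (F.equivFin.symm i : S × S).1,
      fun i => (F.equivFin.symm i : S × S).2, fun σ => ?_⟩
    have h1 := congrFun hz σ
    rw [map_sum] at h1
    simp only [Finset.sum_apply, galoisCoveringMap_tmul] at h1
    calc ∑ i : Fin F.card, (F.equivFin.symm i : S × S).1 * σ • (F.equivFin.symm i : S × S).2
        = ∑ p : F, (p : S × S).1 * σ • (p : S × S).2 :=
          Equiv.sum_comp F.equivFin.symm (fun p : F => (p : S × S).1 * σ • (p : S × S).2)
      _ = ∑ p ∈ F, p.1 * σ • p.2 := Finset.sum_coe_sort F (fun p => p.1 * σ • p.2)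
      _ = if σ = 1 then 1 else 0 := h1
  · rintro ⟨n, x, y, hxy⟩
    -- the "transposed" relation
    have hyx : ∀ σ : G, ∑ i : Fin n, (σ • x i) * y i = if σ = 1 then 1 else 0 := by
      intro σ
      have h2 := congrArg (fun s : S => σ • s) (hxy σ⁻¹)
      simp only [Finset.smul_sum, smul_mul', smul_inv_smul, smul_ite, smul_one, smul_zero,
        inv_eq_one] at h2
      exact h2
    -- traces are in R
    have fixedT : ∀ t : S, ∃ r : R, algebraMap R S r = ∑ σ : G, σ • t := by
      intro t
      have : ∀ g : G, g • (∑ σ : G, σ • t) = ∑ σ : G, σ • t := by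
        intro g
        rw [Finset.smul_sum]
        simp only [smul_smul]
        exact Fintype.sum_bijective (fun σ => g * σ) (Group.mulLeft_bijective g) _ _
          (fun σ => rfl)
      obtain ⟨r, hr⟩ := (hfix _).1 this
      exact ⟨r, hr⟩
    have key : ∀ t : S, ∑ i : Fin n, (∑ σ : G, σ • (t * x i)) * y i = t := by
      intro t
      calc ∑ i : Fin n, (∑ σ : G, σ • (t * x i)) * y i
          = ∑ σ : G, σ • t * ∑ i : Fin n, σ • x i * y i := by
            simp only [Finset.sum_mul, Finset.mul_sum]
            rw [Finset.sum_comm]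
            refine Finset.sum_congr rfl fun σ _ => Finset.sum_congr rfl fun i _ => ?_
            rw [smul_mul']; ring
        _ = t := by
            simp only [hyx, mul_ite, mul_one, mul_zero, Finset.sum_ite_eq',
              Finset.mem_univ, if_true, one_smul]
    -- left inverse
    set h := galoisCoveringMap R S G with hh
    have hginv : ∀ z : S ⊗[R] S,
        (∑ σ : G, ∑ i : Fin n, (h z σ * σ • x i) ⊗ₜ[R] y i) = z := by
      intro z
      induction z using TensorProduct.induction_on with
      | zero => simp
      | tmul s t =>
        simp only [galoisCoveringMap_tmul, hh]
        calc ∑ σ : G, ∑ i : Fin n, ((s * σ • t) * σ • x i) ⊗ₜ[R] y i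
            = ∑ i : Fin n, (s * ∑ σ : G, σ • (t * x i)) ⊗ₜ[R] y i := by
              rw [Finset.sum_comm]
              refine Finset.sum_congr rfl fun i _ => ?_
              rw [Finset.mul_sum, TensorProduct.sum_tmul]
              refine Finset.sum_congr rfl fun σ _ => ?_
              rw [smul_mul', mul_assoc]
          _ = ∑ i : Fin n, s ⊗ₜ[R] ((∑ σ : G, σ • (t * x i)) * y i) := by
              refine Finset.sum_congr rfl fun i _ => ?_
              obtain ⟨r, hr⟩ := fixedT (t * x i)
              rw [← hr, mul_comm s, ← Algebra.smul_def, TensorProduct.smul_tmul,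
                Algebra.smul_def, hr]
          _ = s ⊗ₜ[R] (∑ i : Fin n, (∑ σ : G, σ • (t * x i)) * y i) := by
              rw [TensorProduct.tmul_sum]
          _ = s ⊗ₜ[R] t := by rw [key t]
      | add z w ihz ihw =>
        simp only [map_add, Pi.add_apply, add_mul, TensorProduct.add_tmul,
          Finset.sum_add_distrib, ihz, ihw]
    constructor
    · intro z w hzw
      rw [← hginv z, ← hginv w, hzw]
    · intro a
      refine ⟨∑ σ : G, ∑ i : Fin n, (a σ * x i) ⊗ₜ[R] (σ⁻¹ • y i), ?_⟩
      funext τ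
      simp only [map_sum, Finset.sum_apply, galoisCoveringMap_tmul]
      calc ∑ σ : G, ∑ i : Fin n, (a σ * x i) * τ • σ⁻¹ • y i
          = ∑ σ : G, a σ * ∑ i : Fin n, x i * (τ * σ⁻¹) • y i := by
            refine Finset.sum_congr rfl fun σ _ => ?_
            rw [Finset.mul_sum]
            refine Finset.sum_congr rfl fun i _ => ?_
            rw [smul_smul, mul_assoc]
        _ = a τ := by
            simp only [hxy, mul_inv_eq_one, mul_ite, mul_one, mul_zero,
              Finset.sum_ite_eq, Finset.sum_ite_eq', Finset.mem_univ, if_true]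
end

section
/- Let L be a finitely generated field extension of a field k, and let R₁, R₂ be finitely generated k-subalgebras of L that are integral domains whose fraction fields both equal L. Then there exist nonzero elements r₁ ∈ R₁ and r₂ ∈ R₂ such that the localizations R₁[1/r₁] and R₂[1/r₂] are equal as subrings of L. -/
/-!
Clearing denominators of finitely many generators gives `f ∈ R₂` with `R₁ ⊆ R₂[1/f]` and
`g ∈ R₁` with `R₂ ⊆ R₁[1/g]`. Then `f = a / gⁿ` and `g = b / fᵐ` with `a ∈ R₁`, `b ∈ R₂`, and
both `R₁[1/(g a)]` and `R₂[1/(f b)]` are the subring of `L` generated by `R₁`, `R₂`, `1/f`, `1/g`.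
-/

namespace Subalgebra

variable {k L : Type*} [CommSemiring k] [Field L] [Algebra k L] {R S : Subalgebra k L} {r : L}

theorem le_adjoin_insert_inv : R ≤ Algebra.adjoin k (insert r⁻¹ (R : Set L)) :=
  fun _ hx => Algebra.subset_adjoin (Set.mem_insert_of_mem _ hx)

theorem adjoin_insert_inv_le_iff :
    Algebra.adjoin k (insert r⁻¹ (R : Set L)) ≤ S ↔ R ≤ S ∧ r⁻¹ ∈ S := by
  rw [Algebra.adjoin_le_iff, Set.insert_subset_iff, and_comm]
  rfl

theorem mem_adjoin_insert_inv_iff (hr : r ∈ R) (hr0 : r ≠ 0) {x : L} :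
    x ∈ Algebra.adjoin k (insert r⁻¹ (R : Set L)) ↔ ∃ n : ℕ, r ^ n * x ∈ R := by
  constructor
  · intro hx
    induction hx using Algebra.adjoin_induction with
    | mem x hx =>
      rcases hx with rfl | hx
      · exact ⟨1, by simp [hr0]⟩
      · exact ⟨0, by simpa using hx⟩
    | algebraMap c => exact ⟨0, by simp⟩
    | add x y _ _ hx hy =>
      obtain ⟨n, hn⟩ := hx
      obtain ⟨m, hm⟩ := hy
      refine ⟨n + m, ?_⟩
      rw [show r ^ (n + m) * (x + y) = r ^ m * (r ^ n * x) + r ^ n * (r ^ m * y) by ring]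
      exact add_mem (mul_mem (pow_mem hr m) hn) (mul_mem (pow_mem hr n) hm)
    | mul x y _ _ hx hy =>
      obtain ⟨n, hn⟩ := hx
      obtain ⟨m, hm⟩ := hy
      refine ⟨n + m, ?_⟩
      rw [show r ^ (n + m) * (x * y) = (r ^ n * x) * (r ^ m * y) by ring]
      exact mul_mem hn hm
  · rintro ⟨n, hn⟩
    have hinv : r⁻¹ ∈ Algebra.adjoin k (insert r⁻¹ (R : Set L)) :=
      Algebra.subset_adjoin (Set.mem_insert _ _)
    rw [← inv_mul_cancel_left₀ (pow_ne_zero n hr0) x, ← inv_pow]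
    exact mul_mem (pow_mem hinv n) (le_adjoin_insert_inv hn)

theorem exists_le_adjoin_insert_inv_of_fg {B : Subalgebra k L} (hR : R.FG)
    (hB : ∀ x : L, ∃ a b : L, a ∈ B ∧ b ∈ B ∧ b ≠ 0 ∧ x * b = a) :
    ∃ f ∈ B, f ≠ 0 ∧ R ≤ Algebra.adjoin k (insert f⁻¹ (B : Set L)) := by
  classical
  obtain ⟨s, rfl⟩ := hR
  choose num den hnum hden hden0 hfrac using hB
  have hf : ∏ y ∈ s, den y ∈ B := prod_mem fun y _ => hden y
  have hf0 : ∏ y ∈ s, den y ≠ 0 := Finset.prod_ne_zero_iff.mpr fun y _ => hden0 y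
  refine ⟨_, hf, hf0, Algebra.adjoin_le fun y hy => (mem_adjoin_insert_inv_iff hf hf0).mpr ⟨1, ?_⟩⟩
  rw [pow_one, ← Finset.mul_prod_erase s den hy, mul_right_comm, mul_comm (den y), hfrac]
  exact mul_mem (hnum y) (prod_mem fun z _ => hden z)

theorem adjoin_insert_inv_le_adjoin_insert_inv {R₁ R₂ : Subalgebra k L} {f g : L}
    (hf : f ∈ R₂) (hf0 : f ≠ 0) (hg0 : g ≠ 0)
    (hR₁ : R₁ ≤ Algebra.adjoin k (insert f⁻¹ (R₂ : Set L))) {m : ℕ} (hm : f ^ m * g ∈ R₂)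
    (n : ℕ) :
    Algebra.adjoin k (insert (g ^ (n + 1) * f)⁻¹ (R₁ : Set L)) ≤
      Algebra.adjoin k (insert (f ^ (m + 1) * g)⁻¹ (R₂ : Set L)) := by
  have hr : f ^ (m + 1) * g ∈ R₂ := by rw [pow_succ, mul_right_comm]; exact mul_mem hm hf
  have hr0 : f ^ (m + 1) * g ≠ 0 := by positivity
  have hf_inv : f⁻¹ ∈ Algebra.adjoin k (insert (f ^ (m + 1) * g)⁻¹ (R₂ : Set L)) :=
    (mem_adjoin_insert_inv_iff hr hr0).mpr ⟨1, by convert hm using 1; field_simp; ring⟩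
  have hg_inv : g⁻¹ ∈ Algebra.adjoin k (insert (f ^ (m + 1) * g)⁻¹ (R₂ : Set L)) :=
    (mem_adjoin_insert_inv_iff hr hr0).mpr
      ⟨1, by convert pow_mem hf (m + 1) using 1; field_simp⟩
  rw [adjoin_insert_inv_le_iff]
  refine ⟨hR₁.trans (adjoin_insert_inv_le_iff.mpr ⟨le_adjoin_insert_inv, hf_inv⟩), ?_⟩
  rw [show (g ^ (n + 1) * f)⁻¹ = g⁻¹ ^ (n + 1) * f⁻¹ by rw [mul_inv, inv_pow]]
  exact mul_mem (pow_mem hg_inv _) hf_inv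

end Subalgebra

theorem swan_lemma_localizations_agree_general (k L : Type) [Field k] [Field L]
    [Algebra k L]
    (R₁ R₂ : Subalgebra k L) (h₁ : R₁.FG) (h₂ : R₂.FG)
    (hf₁ : ∀ x : L, ∃ a b : L, a ∈ R₁ ∧ b ∈ R₁ ∧ b ≠ 0 ∧ x * b = a)
    (hf₂ : ∀ x : L, ∃ a b : L, a ∈ R₂ ∧ b ∈ R₂ ∧ b ≠ 0 ∧ x * b = a) :
    ∃ r₁ r₂ : L, r₁ ∈ R₁ ∧ r₂ ∈ R₂ ∧ r₁ ≠ 0 ∧ r₂ ≠ 0 ∧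
      Algebra.adjoin k (insert r₁⁻¹ (R₁ : Set L)) =
        Algebra.adjoin k (insert r₂⁻¹ (R₂ : Set L)) := by
  obtain ⟨f, hf, hf0, hR₁⟩ := Subalgebra.exists_le_adjoin_insert_inv_of_fg h₁ hf₂
  obtain ⟨g, hg, hg0, hR₂⟩ := Subalgebra.exists_le_adjoin_insert_inv_of_fg h₂ hf₁
  obtain ⟨n, hn⟩ := (Subalgebra.mem_adjoin_insert_inv_iff hg hg0).mp (hR₂ hf)
  obtain ⟨m, hm⟩ := (Subalgebra.mem_adjoin_insert_inv_iff hf hf0).mp (hR₁ hg)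
  refine ⟨g ^ (n + 1) * f, f ^ (m + 1) * g, ?_, ?_, by positivity, by positivity,
    le_antisymm (Subalgebra.adjoin_insert_inv_le_adjoin_insert_inv hf hf0 hg0 hR₁ hm n)
      (Subalgebra.adjoin_insert_inv_le_adjoin_insert_inv hg hg0 hf0 hR₂ hn m)⟩
  · rw [pow_succ, mul_right_comm]; exact mul_mem hn hg
  · rw [pow_succ, mul_right_comm]; exact mul_mem hm hf

/-- Swan's lemma: if R₁, R₂ are affine k-domains inside a
finitely generated field extension L of k with Frac(R₁) = Frac(R₂) = L, then
there are nonzero r₁ ∈ R₁, r₂ ∈ R₂ with R₁[1/r₁] = R₂[1/r₂] inside L. -/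
theorem swan_lemma_localizations_agree (k L : Type) [Field k] [Field L]
    [Algebra k L] (hLfg : (⊤ : IntermediateField k L).FG)
    (R₁ R₂ : Subalgebra k L) (h₁ : R₁.FG) (h₂ : R₂.FG)
    (hf₁ : ∀ x : L, ∃ a b : L, a ∈ R₁ ∧ b ∈ R₁ ∧ b ≠ 0 ∧ x * b = a)
    (hf₂ : ∀ x : L, ∃ a b : L, a ∈ R₂ ∧ b ∈ R₂ ∧ b ≠ 0 ∧ x * b = a) :
    ∃ r₁ r₂ : L, r₁ ∈ R₁ ∧ r₂ ∈ R₂ ∧ r₁ ≠ 0 ∧ r₂ ≠ 0 ∧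
      Algebra.adjoin k (insert r₁⁻¹ (R₁ : Set L)) =
        Algebra.adjoin k (insert r₂⁻¹ (R₂ : Set L)) :=
  swan_lemma_localizations_agree_general k L R₁ R₂ h₁ h₂ hf₁ hf₂
end
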